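/- Let U be a VLA-J-SS over ℂ. Then the linear span of the commutator defect vectors u_m(v_nw) − v_n(u_mw) − Σ_{i≥0} binom(m,i)·(u_iv)_{m+n−i}w, over all u,v,w ∈ U and m,n ∈ ℕ, equals the linear span of the Jacobi defect vectors Σ_{i≥0} (−1)^i·binom(k,i)·( u_{m+k−i}(v_{n+i}w) − (−1)^k·v_{n+k−i}(u_{m+i}w) ) − Σ_{i≥0} binom(m,i)·(u_{k+i}v)_{m+n−i}w, over all u,v,w ∈ U and k,m,n ∈ ℕ. -/

import Mathlib

/-! The Jacobi defect with parameters `k, m, n` is the alternating binomial combination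
`∑ᵢ (-1)^i (k choose i) •` (commutator defect with parameters `m+k-i, n+i`), and for `k = 0`
it is the commutator defect itself. In this identity the products `u_{m+k-i}(v_{n+i} w)` match
directly, the products `v(u w)` match after reflecting `i ↦ k - i`, and the correction terms
match by `∑ᵢ (-1)^i (k choose i) (m+k-i choose j) = (m choose j-k)`, the coefficient of `X^j`
in `((X+1) - 1)^k (X+1)^m`. -/

open scoped BigOperators

noncomputable section

/-- A VLA-J-SS over `ℂ`: a vector space `U` with a derivation `D` and bilinear products
`mul n` for `n : ℕ`, satisfying truncation and the `D`-compatibility relations (but not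
necessarily the half Jacobi identity or half skew symmetry). -/
structure VLAJSS (U : Type*) [AddCommGroup U] [Module ℂ U] where
  D : U →ₗ[ℂ] U
  mul : ℕ → U →ₗ[ℂ] U →ₗ[ℂ] U
  trunc : ∀ u v : U, ∃ N : ℕ, ∀ n : ℕ, N ≤ n → mul n u v = 0
  dLeft : ∀ (n : ℕ) (u v : U), mul (n + 1) (D u) v = (-((n : ℂ) + 1)) • mul n u v
  dLeftZero : ∀ u v : U, mul 0 (D u) v = 0
  leibniz : ∀ (n : ℕ) (u v : U), D (mul n u v) = mul n (D u) v + mul n u (D v)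

variable {U : Type*} [AddCommGroup U] [Module ℂ U]

/-- The set of commutator defect vectors of a VLA-J-SS. -/
def CommDefects (A : VLAJSS U) : Set U :=
  {x : U | ∃ (u v w : U) (m n : ℕ),
    x = A.mul m u (A.mul n v w) - A.mul n v (A.mul m u w)
      - ∑ᶠ i : ℕ, ((Nat.choose m i : ℂ)) • A.mul (m + n - i) (A.mul i u v) w}

/-- The set of Jacobi defect vectors of a VLA-J-SS. -/
def JacobiDefects (A : VLAJSS U) : Set U :=
  {x : U | ∃ (u v w : U) (k m n : ℕ),
    x = (∑ᶠ i : ℕ, ((-1 : ℂ) ^ i * (Nat.choose k i : ℂ)) •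
          (A.mul (m + k - i) u (A.mul (n + i) v w)
            - ((-1 : ℂ) ^ k) • A.mul (n + k - i) v (A.mul (m + i) u w)))
      - ∑ᶠ i : ℕ, ((Nat.choose m i : ℂ)) • A.mul (m + n - i) (A.mul (k + i) u v) w}

open Finset Polynomial

section Defects

variable {R M : Type*} [CommRing R] [AddCommGroup M] [Module R M]

theorem sum_range_neg_one_pow_mul_choose_mul_choose (k m j : ℕ) :
    ∑ i ∈ range (k + 1), (-1 : R) ^ i * k.choose i * (m + k - i).choose j =
      if k ≤ j then (m.choose (j - k) : R) else 0 := by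
  have hpoly : X ^ k * (X + 1) ^ m =
      ∑ i ∈ range (k + 1), C ((-1 : R) ^ i * k.choose i) * (X + 1) ^ (m + k - i) := by
    have hX : (X : R[X]) = -1 + (X + 1) := by ring
    rw [hX, add_pow, ← hX, sum_mul]
    refine sum_congr rfl fun i hi => ?_
    rw [show m + k - i = (k - i) + m by have := mem_range.1 hi; omega, pow_add]
    simp only [map_mul, map_pow, map_neg, map_one, map_natCast]
    ring
  simpa only [coeff_X_pow_mul', coeff_X_add_one_pow, finsetSum_coeff, coeff_C_mul, eq_comm]
    using congrArg (coeff · j) hpoly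

theorem finsum_smul_eq_sum_range (c : ℕ → R) (f : ℕ → M) {N : ℕ}
    (hc : ∀ i, N ≤ i → c i = 0) :
    ∑ᶠ i, c i • f i = ∑ i ∈ range N, c i • f i :=
  finsum_eq_sum_of_support_subset _ fun i hi => by
    by_contra h
    exact hi (by simp [hc i (by simpa using h)])

theorem finsum_choose_smul (m : ℕ) (f : ℕ → M) {N : ℕ} (hN : m < N) :
    ∑ᶠ i, (m.choose i : R) • f i = ∑ i ∈ range N, (m.choose i : R) • f i :=
  finsum_smul_eq_sum_range _ f fun i hi => by
    rw [Nat.choose_eq_zero_of_lt (by omega), Nat.cast_zero]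

theorem sum_range_neg_one_pow_choose_smul_reflect (k : ℕ) (f : ℕ → M) :
    ∑ i ∈ range (k + 1), ((-1 : R) ^ i * k.choose i * (-1) ^ k) • f (k - i) =
      ∑ i ∈ range (k + 1), ((-1 : R) ^ i * k.choose i) • f i := by
  rw [← sum_range_reflect]
  refine sum_congr rfl fun i hi => ?_
  obtain ⟨d, rfl⟩ := Nat.exists_eq_add_of_le (mem_range_succ_iff.1 hi)
  have hsq : (-1 : R) ^ d * (-1) ^ d = 1 := by rw [← mul_pow]; simp
  rw [Nat.add_sub_cancel, Nat.add_sub_cancel_left, Nat.add_sub_cancel, ← Nat.choose_symm_add,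
    pow_add]
  congr 1
  linear_combination ((-1) ^ i * ((i + d).choose i : R)) * hsq

theorem sum_range_neg_one_pow_choose_smul_sum_choose_smul (k m : ℕ) (g : ℕ → M) :
    ∑ i ∈ range (k + 1), ((-1 : R) ^ i * k.choose i) •
        ∑ j ∈ range (k + (m + 1)), ((m + k - i).choose j : R) • g j =
      ∑ i ∈ range (m + 1), (m.choose i : R) • g (k + i) := by
  simp only [smul_sum, smul_smul]
  rw [sum_comm]
  simp only [← sum_smul, sum_range_neg_one_pow_mul_choose_mul_choose, sum_range_add]
  rw [sum_eq_zero fun j hj => by rw [if_neg (by simpa using hj), zero_smul], zero_add]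
  simp

variable (R) (μ : ℕ → M → M → M)

def commDefect (u v w : M) (m n : ℕ) : M :=
  μ m u (μ n v w) - μ n v (μ m u w) - ∑ᶠ i, (m.choose i : R) • μ (m + n - i) (μ i u v) w

def jacobiDefect (u v w : M) (k m n : ℕ) : M :=
  (∑ᶠ i, ((-1 : R) ^ i * k.choose i) •
      (μ (m + k - i) u (μ (n + i) v w) - (-1 : R) ^ k • μ (n + k - i) v (μ (m + i) u w)))
    - ∑ᶠ i, (m.choose i : R) • μ (m + n - i) (μ (k + i) u v) w

theorem jacobiDefect_eq_sum_commDefect (u v w : M) (k m n : ℕ) :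
    jacobiDefect R μ u v w k m n =
      ∑ i ∈ range (k + 1),
        ((-1 : R) ^ i * k.choose i) • commDefect R μ u v w (m + k - i) (n + i) := by
  have hcomm : ∀ i ∈ range (k + 1), commDefect R μ u v w (m + k - i) (n + i) =
      μ (m + k - i) u (μ (n + i) v w) - μ (n + i) v (μ (m + k - i) u w)
        - ∑ j ∈ range (k + (m + 1)),
            ((m + k - i).choose j : R) • μ (m + n + k - j) (μ j u v) w := by
    intro i hi
    have hik : i ≤ k := mem_range_succ_iff.1 hi
    rw [commDefect, finsum_choose_smul _ _ (by omega : m + k - i < k + (m + 1))]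
    congr 1
    refine sum_congr rfl fun j _ => ?_
    rw [show m + k - i + (n + i) - j = m + n + k - j by omega]
  have hcoeff : ∀ i, k + 1 ≤ i → (-1 : R) ^ i * k.choose i = 0 := fun i hi => by
    rw [Nat.choose_eq_zero_of_lt (by omega), Nat.cast_zero, mul_zero]
  rw [sum_congr rfl fun i hi => by rw [hcomm i hi], jacobiDefect,
    finsum_smul_eq_sum_range _ _ hcoeff, finsum_choose_smul _ _ (Nat.lt_succ_self m)]
  simp only [smul_sub, sum_sub_distrib, smul_smul,
    sum_range_neg_one_pow_choose_smul_sum_choose_smul]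
  congr 2
  · rw [← sum_range_neg_one_pow_choose_smul_reflect]
    refine sum_congr rfl fun i hi => ?_
    have hik : i ≤ k := mem_range_succ_iff.1 hi
    rw [show n + (k - i) = n + k - i by omega, show m + k - (k - i) = m + i by omega]
  · funext i
    rw [show m + n + k - (k + i) = m + n - i by omega]

theorem jacobiDefect_zero (u v w : M) (m n : ℕ) :
    jacobiDefect R μ u v w 0 m n = commDefect R μ u v w m n := by
  simp [jacobiDefect_eq_sum_commDefect]

end Defects

/-- for a VLA-J-SS, the linear span of the commutator defect vectors
equals the linear span of the Jacobi defect vectors. -/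
theorem stmt10 (A : VLAJSS U) :
    Submodule.span ℂ (CommDefects A) = Submodule.span ℂ (JacobiDefects A) := by
  let μ : ℕ → U → U → U := fun n a b => A.mul n a b
  refine le_antisymm (Submodule.span_le.2 ?_) (Submodule.span_le.2 ?_)
  · rintro _ ⟨u, v, w, m, n, rfl⟩
    exact Submodule.subset_span ⟨u, v, w, 0, m, n, (jacobiDefect_zero ℂ μ u v w m n).symm⟩
  · rintro _ ⟨u, v, w, k, m, n, rfl⟩
    change jacobiDefect ℂ μ u v w k m n ∈ _
    rw [jacobiDefect_eq_sum_commDefect]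
    exact Submodule.sum_mem _ fun i _ => Submodule.smul_mem _ _
      (Submodule.subset_span ⟨u, v, w, m + k - i, n + i, rfl⟩)

end
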